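/- Let d'₁ be the antiderivation of 𝔄(g) with d'₁B = −ψ, d'₁β = φ, d'₁(other generators) = 0. Then on the base ℬ(g), the operator dd'₁ + d'₁d equals the degree operator counting total degree in the generators (ψ, φ, B, β). -/

import Mathlib

open scoped TensorProduct

noncomputable section

/-- The graded bracket on `g ⊗ Ω` induced by `[X⊗P, Y⊗Q] = ⁅X,Y⁆ ⊗ (P*Q)`. -/
def gaBracket (g : Type) [LieRing g] [LieAlgebra ℂ g] (Ω : Type) [Ring Ω] [Algebra ℂ Ω] :
    (g ⊗[ℂ] Ω) →ₗ[ℂ] (g ⊗[ℂ] Ω) →ₗ[ℂ] (g ⊗[ℂ] Ω) :=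
  TensorProduct.map₂
    (LinearMap.mk₂ ℂ (fun X Y => ⁅X, Y⁆)
      (by intros; simp [add_lie]) (by intros; simp [smul_lie])
      (by intros; simp [lie_add]) (by intros; simp [lie_smul]))
    (LinearMap.mul ℂ Ω)

/-- The submodule of `g ⊗ Ω` of `g`-valued elements with components in a submodule `S` of `Ω`. -/
def gvSub (g : Type) [LieRing g] [LieAlgebra ℂ g] {Ω : Type} [AddCommGroup Ω] [Module ℂ Ω]
    (S : Submodule ℂ Ω) : Submodule ℂ (g ⊗[ℂ] Ω) :=
  LinearMap.range (LinearMap.lTensor g S.subtype)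

/-- A bigraded-commutative algebra structure on `Ω` given by bidegree pieces `gr k l`. -/
def IsBigradedCommAlg (Ω : Type) [Ring Ω] [Algebra ℂ Ω] (gr : ℕ → ℕ → Submodule ℂ Ω) : Prop :=
  (1 : Ω) ∈ gr 0 0 ∧
  (∀ k l m n, ∀ a ∈ gr k l, ∀ b ∈ gr m n, a * b ∈ gr (k + m) (l + n)) ∧
  (∀ k l m n, ∀ a ∈ gr k l, ∀ b ∈ gr m n,
      a * b = ((-1 : ℂ)) ^ ((k + l) * (m + n)) • (b * a)) ∧
  DirectSum.IsInternal (fun p : ℕ × ℕ => gr p.1 p.2)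

/-- An antiderivation with respect to the total degree of a bigrading. -/
def IsAntideriv {Ω : Type} [Ring Ω] [Algebra ℂ Ω] (gr : ℕ → ℕ → Submodule ℂ Ω)
    (R : Ω →ₗ[ℂ] Ω) : Prop :=
  ∀ k l, ∀ a ∈ gr k l, ∀ b, R (a * b) = R a * b + ((-1 : ℂ)) ^ (k + l) • (a * R b)

/-- The bigraded Weil algebra data: a bigraded-commutative differential algebra with
differentials `d`, `δ` of bidegrees `(1,0)`, `(0,1)` and `g`-valued generators
`A, α, F, φ, ψ, ξ, B, β` satisfying the structure equations of Lemma 1.1. -/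
structure BigradedWeil (g : Type) [LieRing g] [LieAlgebra ℂ g]
    (𝔄 : Type) [Ring 𝔄] [Algebra ℂ 𝔄] where
  gr : ℕ → ℕ → Submodule ℂ 𝔄
  graded : IsBigradedCommAlg 𝔄 gr
  d : 𝔄 →ₗ[ℂ] 𝔄
  δ : 𝔄 →ₗ[ℂ] 𝔄
  d_antideriv : IsAntideriv gr d
  δ_antideriv : IsAntideriv gr δ
  d_gr : ∀ k l, ∀ x ∈ gr k l, d x ∈ gr (k + 1) l
  δ_gr : ∀ k l, ∀ x ∈ gr k l, δ x ∈ gr k (l + 1)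
  d_sq : ∀ x, d (d x) = 0
  δ_sq : ∀ x, δ (δ x) = 0
  d_δ : ∀ x, d (δ x) + δ (d x) = 0
  A : g ⊗[ℂ] 𝔄
  α : g ⊗[ℂ] 𝔄
  F : g ⊗[ℂ] 𝔄
  φ : g ⊗[ℂ] 𝔄
  ψ : g ⊗[ℂ] 𝔄
  ξ : g ⊗[ℂ] 𝔄
  B : g ⊗[ℂ] 𝔄
  β : g ⊗[ℂ] 𝔄
  A_mem : A ∈ gvSub g (gr 1 0)
  α_mem : α ∈ gvSub g (gr 0 1)
  F_mem : F ∈ gvSub g (gr 2 0)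
  φ_mem : φ ∈ gvSub g (gr 0 2)
  ψ_mem : ψ ∈ gvSub g (gr 1 1)
  ξ_mem : ξ ∈ gvSub g (gr 1 1)
  B_mem : B ∈ gvSub g (gr 2 1)
  β_mem : β ∈ gvSub g (gr 1 2)
  eqF : F = LinearMap.lTensor g d A + (2⁻¹ : ℂ) • gaBracket g 𝔄 A A
  eqφ : φ = LinearMap.lTensor g δ α + (2⁻¹ : ℂ) • gaBracket g 𝔄 α α
  eqψ : ψ = LinearMap.lTensor g δ A + LinearMap.lTensor g d α + gaBracket g 𝔄 A α
  eqξ : ξ = LinearMap.lTensor g δ A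
  eqB : B = LinearMap.lTensor g δ F + gaBracket g 𝔄 α F
  eqβ : β = LinearMap.lTensor g d φ + gaBracket g 𝔄 A φ

/-- The universal property expressing that the bigraded-commutative algebra `𝔄` is free on
the given list of `g`-valued generators with the given bidegrees. -/
def FreeOn (g : Type) [LieRing g] [LieAlgebra ℂ g] {𝔄 : Type} [Ring 𝔄] [Algebra ℂ 𝔄]
    (gr : ℕ → ℕ → Submodule ℂ 𝔄) {m : ℕ} (gens : Fin m → (ℕ × ℕ) × (g ⊗[ℂ] 𝔄)) : Prop :=
  ∀ (Ω : Type) [Ring Ω] [Algebra ℂ Ω] (grΩ : ℕ → ℕ → Submodule ℂ Ω),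
    IsBigradedCommAlg Ω grΩ →
    ∀ v : Fin m → g ⊗[ℂ] Ω,
      (∀ j, v j ∈ gvSub g (grΩ (gens j).1.1 (gens j).1.2)) →
      ∃! h : 𝔄 →ₐ[ℂ] Ω,
        (∀ k l, ∀ x ∈ gr k l, h x ∈ grΩ k l) ∧
        ∀ j, LinearMap.lTensor g h.toLinearMap (gens j).2 = v j

/-- The list of generators of the bigraded Weil algebra with their bidegrees. -/
def BigradedWeil.gens {g : Type} [LieRing g] [LieAlgebra ℂ g] {𝔄 : Type} [Ring 𝔄]
    [Algebra ℂ 𝔄] (W : BigradedWeil g 𝔄) : Fin 8 → (ℕ × ℕ) × (g ⊗[ℂ] 𝔄) :=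
  ![((1, 0), W.A), ((0, 1), W.α), ((2, 0), W.F), ((0, 2), W.φ),
    ((1, 1), W.ψ), ((1, 1), W.ξ), ((2, 1), W.B), ((1, 2), W.β)]

/-- The `i`-th component in `𝔄` of a `g`-valued element of `g ⊗ 𝔄`, w.r.t. a basis of `g`. -/
def coordEv {g : Type} [LieRing g] [LieAlgebra ℂ g] {ι : Type} (b : Module.Basis ι ℂ g)
    {𝔄 : Type} [Ring 𝔄] [Algebra ℂ 𝔄] (i : ι) : g ⊗[ℂ] 𝔄 →ₗ[ℂ] 𝔄 :=
  (TensorProduct.lid ℂ 𝔄).toLinearMap ∘ₗ LinearMap.rTensor 𝔄 (b.coord i)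

/-- Evaluation of a multilinear form `I` on `g` on `g`-valued elements `Z j ∈ g ⊗ 𝔄`,
multiplying the `𝔄`-components in order. -/
def multiEval {g : Type} [LieRing g] [LieAlgebra ℂ g] {ι : Type} [Fintype ι]
    (b : Module.Basis ι ℂ g) {𝔄 : Type} [Ring 𝔄] [Algebra ℂ 𝔄] {n : ℕ}
    (I : MultilinearMap ℂ (fun _ : Fin n => g) ℂ) (Z : Fin n → g ⊗[ℂ] 𝔄) : 𝔄 :=
  ∑ iv : Fin n → ι, I (fun j => b (iv j)) • (List.ofFn fun j => coordEv b (iv j) (Z j)).prod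

/-- `ad`-invariance of a multilinear form on `g`. -/
def IsInvForm {g : Type} [LieRing g] [LieAlgebra ℂ g] {n : ℕ}
    (I : MultilinearMap ℂ (fun _ : Fin n => g) ℂ) : Prop :=
  ∀ (X : g) (v : Fin n → g), ∑ j, I (Function.update v j ⁅v j, X⁆) = 0

/-- Symmetry of a multilinear form on `g`. -/
def IsSymForm {g : Type} [LieRing g] [LieAlgebra ℂ g] {n : ℕ}
    (I : MultilinearMap ℂ (fun _ : Fin n => g) ℂ) : Prop :=
  ∀ (σ : Equiv.Perm (Fin n)) (v : Fin n → g), I (fun j => v (σ j)) = I v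

/-- The five `g`-valued elements `F, ψ, φ, B, β` of the bigraded Weil algebra. -/
def BigradedWeil.genOf {g : Type} [LieRing g] [LieAlgebra ℂ g] {𝔄 : Type} [Ring 𝔄]
    [Algebra ℂ 𝔄] (W : BigradedWeil g 𝔄) : Fin 5 → g ⊗[ℂ] 𝔄 :=
  ![W.F, W.ψ, W.φ, W.B, W.β]

/-- The base `ℬ(g) ⊆ 𝔄(g)`: the span of the invariant "polynomials" `𝓘(F,ψ,φ,B,β)`. -/
def baseB {g : Type} [LieRing g] [LieAlgebra ℂ g] {ι : Type} [Fintype ι] (b : Module.Basis ι ℂ g)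
    {𝔄 : Type} [Ring 𝔄] [Algebra ℂ 𝔄] (W : BigradedWeil g 𝔄) : Submodule ℂ 𝔄 :=
  Submodule.span ℂ { x | ∃ (n : ℕ) (I : MultilinearMap ℂ (fun _ : Fin n => g) ℂ)
      (c : Fin n → Fin 5), IsInvForm I ∧ x = multiEval b I (fun j => W.genOf (c j)) }

end

noncomputable section


/-!
The anticommutator `L = d d₁' + d₁' d` of two odd antiderivations is an even derivation, so on a
product of components of generators it acts by the sum of the weights of the factors; it remains
to see that `L F = 0` and that `L` fixes `ψ, φ, B, β`. Since `d² = 0`, `L` commutes with `d`, and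
since `d₁'` kills both `A` and `dA`, `L` commutes with `[A, ·]`. Writing `F = dA + ½[A, A]`,
`ψ = ξ + dα + [A, α]`, `β = dφ + [A, φ]` and, by the Bianchi identity, `B = -dψ - [A, ψ]`,
everything reduces to `L A = L α = 0`, `L ξ = ψ` and `L φ = φ`, which are read off from the
structure equations.
-/

open TensorProduct

section GradedBracket

variable {g : Type} [LieRing g] [LieAlgebra ℂ g] {𝔄 : Type} [Ring 𝔄] [Algebra ℂ 𝔄]

@[simp]
theorem gaBracket_tmul (X Y : g) (P Q : 𝔄) :
    gaBracket g 𝔄 (X ⊗ₜ P) (Y ⊗ₜ Q) = ⁅X, Y⁆ ⊗ₜ (P * Q) := by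
  simp [gaBracket]

theorem gvSub_induction {S : Submodule ℂ 𝔄} {p : ∀ u : g ⊗[ℂ] 𝔄, u ∈ gvSub g S → Prop}
    (zero : p 0 (zero_mem _))
    (tmul : ∀ (X : g) (P : 𝔄) (hP : P ∈ S), p (X ⊗ₜ P) ⟨X ⊗ₜ ⟨P, hP⟩, rfl⟩)
    (add : ∀ u v hu hv, p u hu → p v hv → p (u + v) (add_mem hu hv))
    {u : g ⊗[ℂ] 𝔄} (hu : u ∈ gvSub g S) : p u hu := by
  obtain ⟨w, rfl⟩ := hu
  induction w using TensorProduct.induction_on with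
  | zero => simpa using zero
  | tmul X P => exact tmul X P P.2
  | add w w' hw hw' => simpa using add _ _ _ _ hw hw'

theorem lTensor_mem_gvSub {S T : Submodule ℂ 𝔄} {f : 𝔄 →ₗ[ℂ] 𝔄} (hf : ∀ x ∈ S, f x ∈ T)
    {u : g ⊗[ℂ] 𝔄} (hu : u ∈ gvSub g S) : f.lTensor g u ∈ gvSub g T := by
  induction hu using gvSub_induction with
  | zero => simp
  | tmul X P hP => exact ⟨X ⊗ₜ ⟨f P, hf P hP⟩, rfl⟩
  | add u v _ _ hu hv => rw [map_add]; exact add_mem hu hv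

theorem lTensor_gaBracket_of_mem {gr : ℕ → ℕ → Submodule ℂ 𝔄} {R : 𝔄 →ₗ[ℂ] 𝔄}
    (hR : IsAntideriv gr R) {k l : ℕ} {u : g ⊗[ℂ] 𝔄} (hu : u ∈ gvSub g (gr k l))
    (v : g ⊗[ℂ] 𝔄) :
    R.lTensor g (gaBracket g 𝔄 u v) = gaBracket g 𝔄 (R.lTensor g u) v
      + (-1 : ℂ) ^ (k + l) • gaBracket g 𝔄 u (R.lTensor g v) := by
  induction hu using gvSub_induction with
  | zero => simp
  | tmul X P hP =>
    induction v using TensorProduct.induction_on with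
    | zero => simp
    | tmul Y Q => simp [hR k l P hP Q, tmul_add]
    | add v w hv hw => simp only [map_add, hv, hw, smul_add]; abel
  | add u u' _ _ hu hu' => simp only [map_add, LinearMap.add_apply, hu, hu', smul_add]; abel

theorem gaBracket_comm_of_mem {gr : ℕ → ℕ → Submodule ℂ 𝔄} (hgr : IsBigradedCommAlg 𝔄 gr)
    {k l m n : ℕ} {u v : g ⊗[ℂ] 𝔄} (hu : u ∈ gvSub g (gr k l)) (hv : v ∈ gvSub g (gr m n)) :
    gaBracket g 𝔄 u v = -((-1 : ℂ) ^ ((k + l) * (m + n)) • gaBracket g 𝔄 v u) := by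
  induction hu using gvSub_induction with
  | zero => simp
  | tmul X P hP =>
    induction hv using gvSub_induction with
    | zero => simp
    | tmul Y Q hQ =>
      rw [gaBracket_tmul, gaBracket_tmul, hgr.2.2.1 _ _ _ _ _ hP _ hQ, tmul_smul,
        ← lie_skew Y X, neg_tmul, smul_neg, neg_neg]
    | add v w _ _ hv hw => simp only [map_add, LinearMap.add_apply, hv, hw, smul_add, neg_add]
  | add u u' _ _ hu hu' => simp only [map_add, LinearMap.add_apply, hu, hu', smul_add, neg_add]

theorem gaBracket_gaBracket_of_mem {gr : ℕ → ℕ → Submodule ℂ 𝔄}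
    (hgr : IsBigradedCommAlg 𝔄 gr) {k l m n : ℕ} {u v : g ⊗[ℂ] 𝔄}
    (hu : u ∈ gvSub g (gr k l)) (hv : v ∈ gvSub g (gr m n)) (w : g ⊗[ℂ] 𝔄) :
    gaBracket g 𝔄 u (gaBracket g 𝔄 v w) = gaBracket g 𝔄 (gaBracket g 𝔄 u v) w
      + (-1 : ℂ) ^ ((k + l) * (m + n)) • gaBracket g 𝔄 v (gaBracket g 𝔄 u w) := by
  induction hu using gvSub_induction with
  | zero => simp
  | tmul X P hP =>
    induction hv using gvSub_induction with
    | zero => simp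
    | tmul Y Q hQ =>
      induction w using TensorProduct.induction_on with
      | zero => simp
      | tmul Z R =>
        have hQP : Q * (P * R) = (-1 : ℂ) ^ ((k + l) * (m + n)) • (P * (Q * R)) := by
          rw [← mul_assoc, hgr.2.2.1 _ _ _ _ _ hQ _ hP, smul_mul_assoc, mul_assoc, mul_comm]
        have hsq : (-1 : ℂ) ^ ((k + l) * (m + n)) * (-1) ^ ((k + l) * (m + n)) = 1 := by
          rw [← mul_pow, neg_one_mul, neg_neg, one_pow]
        simp only [gaBracket_tmul, hQP, tmul_smul, smul_smul, hsq, one_smul, leibniz_lie X Y Z,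
          add_tmul, mul_assoc]
      | add w w' hw hw' => simp only [map_add, hw, hw', smul_add]; abel
    | add v v' _ _ hv hv' => simp only [map_add, LinearMap.add_apply, hv, hv', smul_add]; abel
  | add u u' _ _ hu hu' => simp only [map_add, LinearMap.add_apply, hu, hu', smul_add]; abel

end GradedBracket

def anticomm {M : Type} [AddCommGroup M] [Module ℂ M] (f h : M →ₗ[ℂ] M) : M →ₗ[ℂ] M :=
  f ∘ₗ h + h ∘ₗ f

@[simp]
theorem anticomm_apply {M : Type} [AddCommGroup M] [Module ℂ M] (f h : M →ₗ[ℂ] M) (x : M) :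
    anticomm f h x = f (h x) + h (f x) :=
  rfl

section Antiderivation

variable {𝔄 : Type} [Ring 𝔄] [Algebra ℂ 𝔄] {gr : ℕ → ℕ → Submodule ℂ 𝔄} {d e : 𝔄 →ₗ[ℂ] 𝔄}

theorem IsAntideriv.map_one (hd : IsAntideriv gr d) (hone : (1 : 𝔄) ∈ gr 0 0) : d 1 = 0 := by
  simpa using hd 0 0 1 hone 1

/-- `e` need only be odd on the left factor `a`, which is what `hdeg` expresses. -/
theorem IsAntideriv.anticomm_mul (hd : IsAntideriv gr d) (he : IsAntideriv gr e)
    (hd_gr : ∀ k l, ∀ x ∈ gr k l, d x ∈ gr (k + 1) l) {a : 𝔄} {k l k' l' : ℕ}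
    (ha : a ∈ gr k l) (hea : e a ∈ gr k' l') (hdeg : k + l = k' + l' + 1) (x : 𝔄) :
    anticomm d e (a * x) = anticomm d e a * x + a * anticomm d e x := by
  have hsign : (-1 : ℂ) ^ (k + l) = -(-1) ^ (k' + l') := by rw [hdeg, pow_succ, mul_neg_one]
  have hsign' : (-1 : ℂ) ^ (k + 1 + l) = (-1) ^ (k' + l') := by
    rw [add_right_comm, pow_succ, hsign, mul_neg_one, neg_neg]
  have hsq : (-1 : ℂ) ^ (k' + l') * (-1) ^ (k' + l') = 1 := by
    rw [← mul_pow, neg_one_mul, neg_neg, one_pow]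
  rw [anticomm_apply, anticomm_apply, anticomm_apply, he k l a ha x, hd k l a ha x, map_add,
    map_add, map_smul, map_smul, hd k' l' _ hea x, he (k + 1) l _ (hd_gr k l a ha) x,
    hd k l a ha (e x), he k l a ha (d x), hsign, hsign']
  generalize (-1 : ℂ) ^ (k' + l') = ε at hsq ⊢
  simp only [smul_add, neg_smul, smul_neg, neg_neg]
  simp only [smul_smul, hsq, one_smul, add_mul, mul_add]
  abel

theorem IsAntideriv.anticomm_list_prod (hd : IsAntideriv gr d) (he : IsAntideriv gr e)
    (hone : (1 : 𝔄) ∈ gr 0 0) (hd_gr : ∀ k l, ∀ x ∈ gr k l, d x ∈ gr (k + 1) l) {n : ℕ}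
    (a : Fin n → 𝔄) (m : Fin n → ℂ)
    (ha : ∀ j, ∃ k l k' l', a j ∈ gr k l ∧ e (a j) ∈ gr k' l' ∧ k + l = k' + l' + 1)
    (hm : ∀ j, anticomm d e (a j) = m j • a j) :
    anticomm d e (List.ofFn a).prod = (∑ j, m j) • (List.ofFn a).prod := by
  induction n with
  | zero => simp [hd.map_one hone, he.map_one hone]
  | succ n ih =>
    obtain ⟨k, l, k', l', ha₀, hea₀, hdeg⟩ := ha 0
    rw [List.ofFn_succ, List.prod_cons, hd.anticomm_mul he hd_gr ha₀ hea₀ hdeg, hm 0,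
      ih (fun j => a j.succ) (fun j => m j.succ) (fun j => ha j.succ) (fun j => hm j.succ),
      Fin.sum_univ_succ, add_smul, smul_mul_assoc, mul_smul_comm]

end Antiderivation

section Coordinates

variable {g : Type} [LieRing g] [LieAlgebra ℂ g] {ι : Type} (b : Module.Basis ι ℂ g)
  {𝔄 : Type} [Ring 𝔄] [Algebra ℂ 𝔄]

theorem coordEv_tmul (i : ι) (X : g) (P : 𝔄) : coordEv b i (X ⊗ₜ P) = b.repr X i • P := by
  simp [coordEv]

theorem coordEv_lTensor (i : ι) (f : 𝔄 →ₗ[ℂ] 𝔄) (z : g ⊗[ℂ] 𝔄) :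
    coordEv b i (f.lTensor g z) = f (coordEv b i z) := by
  induction z using TensorProduct.induction_on with
  | zero => simp
  | tmul X P => simp [coordEv_tmul]
  | add x y hx hy => simp [hx, hy]

theorem coordEv_anticomm_lTensor (i : ι) (f h : 𝔄 →ₗ[ℂ] 𝔄) (z : g ⊗[ℂ] 𝔄) :
    coordEv b i (anticomm (f.lTensor g) (h.lTensor g) z) = anticomm f h (coordEv b i z) := by
  simp [coordEv_lTensor]

theorem coordEv_mem_of_mem_gvSub {S : Submodule ℂ 𝔄} {z : g ⊗[ℂ] 𝔄} (hz : z ∈ gvSub g S)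
    (i : ι) : coordEv b i z ∈ S := by
  induction hz using gvSub_induction with
  | zero => simp
  | tmul X P hP => rw [coordEv_tmul]; exact S.smul_mem _ hP
  | add u v _ _ hu hv => rw [map_add]; exact add_mem hu hv

end Coordinates

namespace BigradedWeil

variable {g : Type} [LieRing g] [LieAlgebra ℂ g] {𝔄 : Type} [Ring 𝔄] [Algebra ℂ 𝔄]

section StructureEquations

variable (W : BigradedWeil g 𝔄)

theorem lTensor_d_lTensor_d (z : g ⊗[ℂ] 𝔄) : W.d.lTensor g (W.d.lTensor g z) = 0 := by
  rw [← LinearMap.lTensor_comp_apply, show W.d ∘ₗ W.d = 0 from LinearMap.ext W.d_sq,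
    LinearMap.lTensor_zero, LinearMap.zero_apply]

theorem lTensor_d_lTensor_δ (z : g ⊗[ℂ] 𝔄) :
    W.d.lTensor g (W.δ.lTensor g z) = -W.δ.lTensor g (W.d.lTensor g z) := by
  have hanti : W.d ∘ₗ W.δ = -(W.δ ∘ₗ W.d) :=
    LinearMap.ext fun x => eq_neg_of_add_eq_zero_left (W.d_δ x)
  rw [← LinearMap.lTensor_comp_apply, hanti, LinearMap.lTensor_neg, LinearMap.neg_apply,
    LinearMap.lTensor_comp_apply]

theorem lTensor_d_A : W.d.lTensor g W.A = W.F - (2⁻¹ : ℂ) • gaBracket g 𝔄 W.A W.A := by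
  rw [W.eqF]; abel

theorem lTensor_d_α : W.d.lTensor g W.α = W.ψ - W.ξ - gaBracket g 𝔄 W.A W.α := by
  rw [W.eqψ, W.eqξ]; abel

theorem lTensor_δ_F : W.δ.lTensor g W.F = W.B - gaBracket g 𝔄 W.α W.F := by
  rw [W.eqB]; abel

theorem lTensor_d_φ : W.d.lTensor g W.φ = W.β - gaBracket g 𝔄 W.A W.φ := by
  rw [W.eqβ]; abel

theorem lTensor_d_ξ :
    W.d.lTensor g W.ξ = -W.B + gaBracket g 𝔄 W.α W.F - gaBracket g 𝔄 W.A W.ξ := by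
  have hξA := gaBracket_comm_of_mem W.graded W.ξ_mem W.A_mem
  calc W.d.lTensor g W.ξ = -W.δ.lTensor g (W.d.lTensor g W.A) := by
        rw [W.eqξ, lTensor_d_lTensor_δ]
    _ = _ := by
        rw [lTensor_d_A, map_sub, map_smul, lTensor_gaBracket_of_mem W.δ_antideriv W.A_mem,
          ← W.eqξ, lTensor_δ_F, hξA]
        norm_num
        module

/-- The Bianchi identity for `ψ`. -/
theorem lTensor_d_ψ : W.d.lTensor g W.ψ = -W.B - gaBracket g 𝔄 W.A W.ψ := by
  have hαF := gaBracket_comm_of_mem W.graded W.α_mem W.F_mem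
  have hJacobi := gaBracket_gaBracket_of_mem W.graded W.A_mem W.A_mem W.α
  conv_lhs => rw [W.eqψ, ← W.eqξ]
  rw [map_add, map_add, lTensor_d_lTensor_d, lTensor_gaBracket_of_mem W.d_antideriv W.A_mem,
    lTensor_d_ξ, lTensor_d_A, lTensor_d_α, hαF]
  norm_num at hJacobi ⊢
  linear_combination (norm := module) (2⁻¹ : ℂ) • hJacobi

theorem anticomm_lTensor_d (d₁' : 𝔄 →ₗ[ℂ] 𝔄) (z : g ⊗[ℂ] 𝔄) :
    anticomm (W.d.lTensor g) (d₁'.lTensor g) (W.d.lTensor g z)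
      = W.d.lTensor g (anticomm (W.d.lTensor g) (d₁'.lTensor g) z) := by
  simp only [anticomm_apply, map_add, lTensor_d_lTensor_d, map_zero, zero_add, add_zero]

end StructureEquations

structure IsD₁' (W : BigradedWeil g 𝔄) (d₁' : 𝔄 →ₗ[ℂ] 𝔄) : Prop where
  antideriv : IsAntideriv W.gr d₁'
  map_A : d₁'.lTensor g W.A = 0
  map_α : d₁'.lTensor g W.α = 0
  map_F : d₁'.lTensor g W.F = 0
  map_φ : d₁'.lTensor g W.φ = 0
  map_ψ : d₁'.lTensor g W.ψ = 0
  map_ξ : d₁'.lTensor g W.ξ = 0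
  map_B : d₁'.lTensor g W.B = -W.ψ
  map_β : d₁'.lTensor g W.β = W.φ

namespace IsD₁'

variable {W : BigradedWeil g 𝔄} {d₁' : 𝔄 →ₗ[ℂ] 𝔄} (h : W.IsD₁' d₁')
include h

theorem map_d_A : d₁'.lTensor g (W.d.lTensor g W.A) = 0 := by
  rw [W.lTensor_d_A, map_sub, map_smul, h.map_F, lTensor_gaBracket_of_mem h.antideriv W.A_mem,
    h.map_A]
  simp

theorem anticomm_A : anticomm (W.d.lTensor g) (d₁'.lTensor g) W.A = 0 := by
  rw [anticomm_apply, h.map_A, h.map_d_A, map_zero, add_zero]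

theorem anticomm_gaBracket_A (v : g ⊗[ℂ] 𝔄) :
    anticomm (W.d.lTensor g) (d₁'.lTensor g) (gaBracket g 𝔄 W.A v)
      = gaBracket g 𝔄 W.A (anticomm (W.d.lTensor g) (d₁'.lTensor g) v) := by
  have hdA := lTensor_mem_gvSub (W.d_gr 1 0) W.A_mem
  simp only [anticomm_apply, lTensor_gaBracket_of_mem h.antideriv W.A_mem,
    lTensor_gaBracket_of_mem W.d_antideriv W.A_mem, lTensor_gaBracket_of_mem h.antideriv hdA,
    map_add, map_smul, h.map_A, h.map_d_A, map_zero, LinearMap.zero_apply]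
  norm_num
  abel

theorem anticomm_α : anticomm (W.d.lTensor g) (d₁'.lTensor g) W.α = 0 := by
  rw [anticomm_apply, h.map_α, W.lTensor_d_α, map_sub, map_sub, h.map_ψ, h.map_ξ,
    lTensor_gaBracket_of_mem h.antideriv W.A_mem, h.map_A, h.map_α]
  simp

theorem anticomm_ξ : anticomm (W.d.lTensor g) (d₁'.lTensor g) W.ξ = W.ψ := by
  rw [anticomm_apply, h.map_ξ, W.lTensor_d_ξ, map_sub, map_add, map_neg, h.map_B,
    lTensor_gaBracket_of_mem h.antideriv W.α_mem, lTensor_gaBracket_of_mem h.antideriv W.A_mem,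
    h.map_α, h.map_F, h.map_A, h.map_ξ]
  simp

theorem anticomm_F : anticomm (W.d.lTensor g) (d₁'.lTensor g) W.F = 0 := by
  rw [W.eqF, map_add, map_smul, anticomm_lTensor_d, h.anticomm_A, h.anticomm_gaBracket_A,
    h.anticomm_A]
  simp

theorem anticomm_ψ : anticomm (W.d.lTensor g) (d₁'.lTensor g) W.ψ = W.ψ := by
  conv_lhs => rw [W.eqψ, ← W.eqξ]
  rw [map_add, map_add, anticomm_lTensor_d, h.anticomm_α, h.anticomm_gaBracket_A, h.anticomm_α,
    h.anticomm_ξ]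
  simp

theorem anticomm_φ : anticomm (W.d.lTensor g) (d₁'.lTensor g) W.φ = W.φ := by
  rw [anticomm_apply, h.map_φ, W.lTensor_d_φ, map_sub, h.map_β,
    lTensor_gaBracket_of_mem h.antideriv W.A_mem, h.map_A, h.map_φ]
  simp

theorem anticomm_β : anticomm (W.d.lTensor g) (d₁'.lTensor g) W.β = W.β := by
  conv_lhs => rw [W.eqβ]
  rw [map_add, anticomm_lTensor_d, h.anticomm_φ, h.anticomm_gaBracket_A, h.anticomm_φ, W.eqβ]

theorem anticomm_B : anticomm (W.d.lTensor g) (d₁'.lTensor g) W.B = W.B := by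
  have hB : W.B = -W.d.lTensor g W.ψ - gaBracket g 𝔄 W.A W.ψ := by
    rw [W.lTensor_d_ψ]; abel
  conv_lhs => rw [hB]
  rw [map_sub, map_neg, anticomm_lTensor_d, h.anticomm_ψ, h.anticomm_gaBracket_A, h.anticomm_ψ,
    hB]

theorem anticomm_genOf (p : Fin 5) :
    anticomm (W.d.lTensor g) (d₁'.lTensor g) (W.genOf p)
      = (if p ≠ 0 then 1 else 0 : ℂ) • W.genOf p := by
  fin_cases p <;> simp [genOf, h.anticomm_F, h.anticomm_ψ, h.anticomm_φ, h.anticomm_B,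
    h.anticomm_β]

theorem exists_bidegree_genOf (p : Fin 5) :
    ∃ k l k' l', W.genOf p ∈ gvSub g (W.gr k l)
      ∧ d₁'.lTensor g (W.genOf p) ∈ gvSub g (W.gr k' l') ∧ k + l = k' + l' + 1 := by
  fin_cases p
  · exact ⟨2, 0, 1, 0, W.F_mem, h.map_F ▸ zero_mem _, rfl⟩
  · exact ⟨1, 1, 1, 0, W.ψ_mem, h.map_ψ ▸ zero_mem _, rfl⟩
  · exact ⟨0, 2, 0, 1, W.φ_mem, h.map_φ ▸ zero_mem _, rfl⟩
  · exact ⟨2, 1, 1, 1, W.B_mem, h.map_B ▸ neg_mem W.ψ_mem, rfl⟩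
  · exact ⟨1, 2, 0, 2, W.β_mem, h.map_β ▸ W.φ_mem, rfl⟩

variable {ι : Type} (b : Module.Basis ι ℂ g)

theorem exists_bidegree_coordEv_genOf (p : Fin 5) (i : ι) :
    ∃ k l k' l', coordEv b i (W.genOf p) ∈ W.gr k l
      ∧ d₁' (coordEv b i (W.genOf p)) ∈ W.gr k' l' ∧ k + l = k' + l' + 1 := by
  obtain ⟨k, l, k', l', hZ, hd₁'Z, hdeg⟩ := h.exists_bidegree_genOf p
  refine ⟨k, l, k', l', coordEv_mem_of_mem_gvSub b hZ i, ?_, hdeg⟩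
  rw [← coordEv_lTensor]
  exact coordEv_mem_of_mem_gvSub b hd₁'Z i

theorem anticomm_coordEv_genOf (p : Fin 5) (i : ι) :
    anticomm W.d d₁' (coordEv b i (W.genOf p))
      = (if p ≠ 0 then 1 else 0 : ℂ) • coordEv b i (W.genOf p) := by
  rw [← coordEv_anticomm_lTensor, h.anticomm_genOf, map_smul]

end IsD₁'

end BigradedWeil

theorem stmt_10_general (g : Type) [LieRing g] [LieAlgebra ℂ g]
    {ι : Type} [Fintype ι] (b : Module.Basis ι ℂ g)
    (𝔄 : Type) [Ring 𝔄] [Algebra ℂ 𝔄] (W : BigradedWeil g 𝔄)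
    (d₁' : 𝔄 →ₗ[ℂ] 𝔄) (h₁ : IsAntideriv W.gr d₁')
    (hB : LinearMap.lTensor g d₁' W.B = -W.ψ)
    (hβ : LinearMap.lTensor g d₁' W.β = W.φ)
    (hA : LinearMap.lTensor g d₁' W.A = 0) (hα : LinearMap.lTensor g d₁' W.α = 0)
    (hF : LinearMap.lTensor g d₁' W.F = 0) (hφ : LinearMap.lTensor g d₁' W.φ = 0)
    (hψ : LinearMap.lTensor g d₁' W.ψ = 0) (hξ : LinearMap.lTensor g d₁' W.ξ = 0) :
    ∀ (n : ℕ) (I : MultilinearMap ℂ (fun _ : Fin n => g) ℂ) (c : Fin n → Fin 5),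
      IsInvForm I →
      W.d (d₁' (multiEval b I fun j => W.genOf (c j)))
          + d₁' (W.d (multiEval b I fun j => W.genOf (c j)))
        = (((Finset.univ.filter fun j => c j ≠ 0).card : ℕ) : ℂ) •
            multiEval b I fun j => W.genOf (c j) := by
  intro n I c _
  have h : W.IsD₁' d₁' := ⟨h₁, hA, hα, hF, hφ, hψ, hξ, hB, hβ⟩
  have hmonomial (iv : Fin n → ι) :
      anticomm W.d d₁' (List.ofFn fun j => coordEv b (iv j) (W.genOf (c j))).prod
        = (((Finset.univ.filter fun j => c j ≠ 0).card : ℕ) : ℂ)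
          • (List.ofFn fun j => coordEv b (iv j) (W.genOf (c j))).prod := by
    rw [Finset.natCast_card_filter]
    exact W.d_antideriv.anticomm_list_prod h₁ W.graded.1 W.d_gr _ _
      (fun j => h.exists_bidegree_coordEv_genOf b (c j) (iv j))
      (fun j => h.anticomm_coordEv_genOf b (c j) (iv j))
  rw [← anticomm_apply, multiEval, map_sum, Finset.smul_sum]
  refine Finset.sum_congr rfl fun iv _ => ?_
  rw [map_smul, hmonomial, smul_comm]

/-- Lemma 2.2, first part: with `d'₁` the antiderivation with
`d'₁B = −ψ`, `d'₁β = φ` and zero on the other generators, `dd'₁ + d'₁d` is, on the base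
`ℬ(g)`, the degree operator counting the factors from `(ψ, φ, B, β)`. -/
theorem stmt_10 (g : Type) [LieRing g] [LieAlgebra ℂ g] [FiniteDimensional ℂ g]
    {ι : Type} [Fintype ι] (b : Module.Basis ι ℂ g)
    (𝔄 : Type) [Ring 𝔄] [Algebra ℂ 𝔄] (W : BigradedWeil g 𝔄)
    (d₁' : 𝔄 →ₗ[ℂ] 𝔄) (h₁ : IsAntideriv W.gr d₁')
    (hB : LinearMap.lTensor g d₁' W.B = -W.ψ)
    (hβ : LinearMap.lTensor g d₁' W.β = W.φ)
    (hA : LinearMap.lTensor g d₁' W.A = 0) (hα : LinearMap.lTensor g d₁' W.α = 0)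
    (hF : LinearMap.lTensor g d₁' W.F = 0) (hφ : LinearMap.lTensor g d₁' W.φ = 0)
    (hψ : LinearMap.lTensor g d₁' W.ψ = 0) (hξ : LinearMap.lTensor g d₁' W.ξ = 0) :
    ∀ (n : ℕ) (I : MultilinearMap ℂ (fun _ : Fin n => g) ℂ) (c : Fin n → Fin 5),
      IsInvForm I →
      W.d (d₁' (multiEval b I fun j => W.genOf (c j)))
          + d₁' (W.d (multiEval b I fun j => W.genOf (c j)))
        = (((Finset.univ.filter fun j => c j ≠ 0).card : ℕ) : ℂ) •
            multiEval b I fun j => W.genOf (c j) :=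
  stmt_10_general g b 𝔄 W d₁' h₁ hB hβ hA hα hF hφ hψ hξ

end
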